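/- Feasibility of the online Lyapunov policy: assume λ ∈ (0,1], the consistency conditions λS_min + U_max ≥ S_min and λS_max + U_min ≤ S_max, parameters Γ ∈ [Γ_min, Γ_max] and W ∈ (0, W_max], where Γ_min = (1/λ)[−W D̲ + (U_max−(1−λ)S_max)⁺] − S_max, Γ_max = (1/λ)[−W D̄ − ((1−λ)S_min−U_min)⁺] − S_min, W_max = [λ(S_max−S_min) − ((1−λ)S_min−U_min)⁺ − (U_max−(1−λ)S_max)⁺]/(D̄−D̲). Suppose the control sequence satisfies: u(t) = U_min whenever λ(s(t)+Γ) ≥ −W D̲, u(t) = U_max whenever λ(s(t)+Γ) ≤ −W D̄, and U_min ≤ u(t) ≤ U_max always. Then s(1) ∈ [S_min, S_max] implies s(t) ∈ [S_min, S_max] for all t, where s(t+1) = λ s(t) + u(t). -/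
import Mathlib


theorem online_policy_feasibility
    (lam Smin Smax Umin Umax Dlo Dhi Gam W : ℝ)
    (hlam : 0 < lam) (hlam1 : lam ≤ 1)
    (hS : Smin ≤ Smax) (hUmin : Umin ≤ 0) (hUmax : 0 ≤ Umax)
    (hD : Dlo ≤ Dhi) (hDlt : 0 < Dhi - Dlo)
    (hfeas1 : Smin ≤ lam * Smin + Umax)
    (hfeas2 : lam * Smax + Umin ≤ Smax)
    (hGamLo : (1 / lam) * (-W * Dlo + max (Umax - (1 - lam) * Smax) 0) - Smax ≤ Gam)
    (hGamHi : Gam ≤ (1 / lam) * (-W * Dhi - max ((1 - lam) * Smin - Umin) 0) - Smin)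
    (hWpos : 0 < W)
    (hWmax : W ≤ (lam * (Smax - Smin) - max ((1 - lam) * Smin - Umin) 0
        - max (Umax - (1 - lam) * Smax) 0) / (Dhi - Dlo))
    (s u : ℕ → ℝ)
    (hdyn : ∀ t, s (t + 1) = lam * s t + u t)
    (hpolicy1 : ∀ t, lam * (s t + Gam) ≥ -W * Dlo → u t = Umin)
    (hpolicy2 : ∀ t, lam * (s t + Gam) ≤ -W * Dhi → u t = Umax)
    (hubound : ∀ t, Umin ≤ u t ∧ u t ≤ Umax)
    (hinit : Smin ≤ s 1 ∧ s 1 ≤ Smax) :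
    ∀ t, 1 ≤ t → Smin ≤ s t ∧ s t ≤ Smax := by

  have hlamne : lam ≠ 0 := ne_of_gt hlam
  set M := max (Umax - (1 - lam) * Smax) 0 with hMdef
  set N := max ((1 - lam) * Smin - Umin) 0 with hNdef
  have hM1 : Umax - (1 - lam) * Smax ≤ M := le_max_left _ _
  have hM0 : 0 ≤ M := le_max_right _ _
  have hN1 : (1 - lam) * Smin - Umin ≤ N := le_max_left _ _
  have hN0 : 0 ≤ N := le_max_right _ _
  have key1 : lam * ((1 / lam) * (-W * Dlo + M) - Smax) = -W * Dlo + M - lam * Smax := by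
    field_simp
  have key2 : lam * ((1 / lam) * (-W * Dhi - N) - Smin) = -W * Dhi - N - lam * Smin := by
    field_simp
  have hGlo : -W * Dlo + M - lam * Smax ≤ lam * Gam := by
    have h := mul_le_mul_of_nonneg_left hGamLo hlam.le
    rw [key1] at h; exact h
  have hGhi : lam * Gam ≤ -W * Dhi - N - lam * Smin := by
    have h := mul_le_mul_of_nonneg_left hGamHi hlam.le
    rw [key2] at h; exact h
  have hW : W * (Dhi - Dlo) ≤ lam * (Smax - Smin) - N - M := (le_div_iff₀ hDlt).mp hWmax
  have step : ∀ t, Smin ≤ s t ∧ s t ≤ Smax → Smin ≤ s (t + 1) ∧ s (t + 1) ≤ Smax := by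
    intro t ⟨ihl, ihr⟩
    have hsl : lam * Smin ≤ lam * s t := mul_le_mul_of_nonneg_left ihl hlam.le
    have hsr : lam * s t ≤ lam * Smax := mul_le_mul_of_nonneg_left ihr hlam.le
    have hWD : 0 ≤ W * (Dhi - Dlo) := by positivity
    have hexp : lam * (s t + Gam) = lam * s t + lam * Gam := mul_add _ _ _
    rw [hdyn t]
    rcases le_or_gt (-W * Dlo) (lam * (s t + Gam)) with hA | hA
    · have hu := hpolicy1 t hA
      rw [hu]
      constructor
      · linarith
      · linarith
    rcases le_or_gt (lam * (s t + Gam)) (-W * Dhi) with hC | hC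
    · have hu := hpolicy2 t hC
      rw [hu]
      constructor
      · linarith
      · linarith
    · obtain ⟨hu1, hu2⟩ := hubound t
      constructor
      · linarith
      · linarith
  intro t ht
  obtain ⟨n, rfl⟩ := Nat.exists_eq_add_of_le ht
  induction n with
  | zero => exact hinit
  | succ n ih => exact step _ (ih (Nat.le_add_right 1 n))
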